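/- Under the setting of the coupled state–costate system: if in addition βq = ι(p) and βq' = ι(p'_aux) where ι : V → Q is a bounded linear trace-type map with (Bw)(v) = ⟨w, ι(v)⟩_Q for all w ∈ Q, v ∈ V, and p'_aux ∈ V satisfies a(p'_aux, v) = ⟨T u' − z, T v⟩_Z for all v ∈ V, then β‖q − q'‖²_Q + ‖T(u' − u)‖²_Z = ⟨q − q', ι(p'_aux) − ι(p'_lim)⟩_Q whenever βq' = ι(p'_lim); in particular if p'_aux = p'_lim then q = q'. -/
import Mathlib


open scoped RealInnerProductSpace

theorem stmt14 {V Q Z : Type*} [NormedAddCommGroup V] [InnerProductSpace ℝ V] [CompleteSpace V]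
    [NormedAddCommGroup Q] [InnerProductSpace ℝ Q] [CompleteSpace Q]
    [NormedAddCommGroup Z] [InnerProductSpace ℝ Z] [CompleteSpace Z]
    (a : V →L[ℝ] V →L[ℝ] ℝ) (α : ℝ) (hα : 0 < α)
    (hsymm : ∀ u v : V, a u v = a v u)
    (hcoer : ∀ v : V, α * ‖v‖ ^ 2 ≤ a v v)
    (T : V →L[ℝ] Z) (ι : V →L[ℝ] Q) (B : Q →L[ℝ] V →L[ℝ] ℝ)
    (hB : ∀ (w : Q) (v : V), B w v = ⟪w, ι v⟫)
    (F : V →L[ℝ] ℝ) (z : Z) (β : ℝ) (hβ : 0 < β)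
    (q q' : Q) (u u' p paux plim : V)
    (hu : ∀ φ : V, a u φ = F φ - B q φ)
    (hu' : ∀ φ : V, a u' φ = F φ - B q' φ)
    (hp : ∀ v : V, a p v = ⟪T u - z, T v⟫)
    (hpaux : ∀ v : V, a paux v = ⟪T u' - z, T v⟫)
    (hq : β • q = ι p) (hq' : β • q' = ι plim) :
    β * ‖q - q'‖ ^ 2 + ‖T (u' - u)‖ ^ 2 = ⟪q - q', ι paux - ι plim⟫ ∧
    (paux = plim → q = q') := by
  have h1 : ⟪q - q', ι p - ι plim⟫ = β * ‖q - q'‖ ^ 2 := by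
    rw [← hq, ← hq', ← smul_sub, real_inner_smul_right, real_inner_self_eq_norm_sq]
  have hBd : ∀ v : V, ⟪q - q', ι v⟫ = a (u' - u) v := by
    intro v
    rw [inner_sub_left, ← hB, ← hB, map_sub, ContinuousLinearMap.sub_apply]
    linarith [hu v, hu' v]
  have h2 : ⟪q - q', ι paux - ι p⟫ = ‖T (u' - u)‖ ^ 2 := by
    rw [← map_sub, hBd, hsymm]
    simp only [map_sub, ContinuousLinearMap.sub_apply, hpaux, hp,
      ← real_inner_self_eq_norm_sq, inner_sub_left, inner_sub_right]
    linarith [real_inner_comm (T u) (T u')]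
  have key : β * ‖q - q'‖ ^ 2 + ‖T (u' - u)‖ ^ 2 = ⟪q - q', ι paux - ι plim⟫ := by
    have hsplit : ι paux - ι plim = (ι paux - ι p) + (ι p - ι plim) := by abel
    rw [hsplit, inner_add_right, h1, h2]; ring
  refine ⟨key, fun hpe => ?_⟩
  subst hpe
  rw [sub_self, inner_zero_right] at key
  have hq0 : ‖q - q'‖ ^ 2 = 0 := by nlinarith [sq_nonneg ‖T (u' - u)‖, sq_nonneg ‖q - q'‖]
  have := pow_eq_zero_iff (n := 2) (by norm_num) |>.mp hq0
  rwa [norm_eq_zero, sub_eq_zero] at this
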